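/- arXiv:1807.07056 — 3 statements merged into one kernel-verified Lean document; each statement's English description precedes it below -/
import Mathlib

section
/- Let G be an m×m real symmetric matrix and A = [[0, -I_m], [-I_m, G]]. A real number λ ≠ 0 is an eigenvalue of A if and only if λ − 1/λ is an eigenvalue of G. -/
open Matrix

theorem stmt_1 (m : ℕ) (G : Matrix (Fin m) (Fin m) ℝ) (hG : G.IsSymm)
    (A : Matrix (Fin m ⊕ Fin m) (Fin m ⊕ Fin m) ℝ)
    (hA : A = Matrix.fromBlocks 0 (-1) (-1) G)
    (lam : ℝ) (hlam : lam ≠ 0) :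
    (∃ v : Fin m ⊕ Fin m → ℝ, v ≠ 0 ∧ A.mulVec v = lam • v) ↔
      (∃ w : Fin m → ℝ, w ≠ 0 ∧ G.mulVec w = (lam - 1 / lam) • w) := by
  subst hA
  constructor
  · rintro ⟨v, hv0, hv⟩
    set x := v ∘ Sum.inl with hx
    set y := v ∘ Sum.inr with hy
    have hvel : v = Sum.elim x y := by ext (i | i) <;> rfl
    rw [hvel, fromBlocks_mulVec] at hv
    have h1 : (0 : Matrix (Fin m) (Fin m) ℝ).mulVec x + (-1 : Matrix (Fin m) (Fin m) ℝ).mulVec y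
        = lam • x := by
      funext i; exact congrFun hv (Sum.inl i)
    have h2 : (-1 : Matrix (Fin m) (Fin m) ℝ).mulVec x + G.mulVec y = lam • y := by
      funext i; exact congrFun hv (Sum.inr i)
    rw [Matrix.zero_mulVec, Matrix.neg_mulVec, Matrix.one_mulVec, zero_add] at h1
    rw [Matrix.neg_mulVec, Matrix.one_mulVec] at h2
    have hyx : y = -(lam • x) := by rw [← h1]; simp
    have hx0 : x ≠ 0 := by
      intro h
      apply hv0
      rw [hvel, h, hyx, h]
      ext (i | i) <;> simp
    refine ⟨x, hx0, ?_⟩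
    rw [hyx] at h2
    funext i
    have h2i := congrFun h2 i
    simp [Matrix.mulVec_neg, Matrix.mulVec_smul] at h2i
    have : -x i - lam * G.mulVec x i = -(lam * (lam * x i)) := by linarith [h2i]
    rw [Pi.smul_apply, smul_eq_mul]
    field_simp
    nlinarith [this]
  · rintro ⟨w, hw0, hw⟩
    refine ⟨Sum.elim w (-(lam • w)), ?_, ?_⟩
    · intro h
      apply hw0
      funext i
      exact congrFun h (Sum.inl i)
    · rw [fromBlocks_mulVec]
      funext i
      rcases i with i | i
      · simp [Matrix.zero_mulVec, Matrix.neg_mulVec, Matrix.one_mulVec]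
      · have := congrFun hw i
        simp [Matrix.neg_mulVec, Matrix.one_mulVec, Matrix.mulVec_neg, Matrix.mulVec_smul,
          Matrix.mulVec, dotProduct] at this ⊢
        rw [this]
        field_simp
        ring
end

section
/- Let u_n ∈ ℝ, λ₁ = u_n/2 − √((u_n/2)²+1), λ₃ = u_n/2 + √((u_n/2)²+1), and a₁₁, a₂₂ ∈ [−1, 1). If T_nn = ((λ₁ − a₁₁λ₃)/(1−a₁₁)) u_n and T_nτ = ((λ₁ − a₂₂λ₃)/(1−a₂₂)) u_τ, then the boundary term BT = T_nn u_n + T_nτ u_τ − (u_n/2)(u_n² + u_τ²) equals −(1/2)√(u_n² + 4)·[((1+a₁₁)/(1−a₁₁)) u_n² + ((1+a₂₂)/(1−a₂₂)) u_τ²], and hence BT ≤ 0. -/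
theorem stmt_13 (un uτ a11 a22 l1 l3 Tnn Tnτ BT : ℝ)
    (ha11 : -1 ≤ a11) (ha11' : a11 < 1) (ha22 : -1 ≤ a22) (ha22' : a22 < 1)
    (hl1 : l1 = un / 2 - Real.sqrt ((un / 2) ^ 2 + 1))
    (hl3 : l3 = un / 2 + Real.sqrt ((un / 2) ^ 2 + 1))
    (hTnn : Tnn = (l1 - a11 * l3) / (1 - a11) * un)
    (hTnτ : Tnτ = (l1 - a22 * l3) / (1 - a22) * uτ)
    (hBT : BT = Tnn * un + Tnτ * uτ - un / 2 * (un ^ 2 + uτ ^ 2)) :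
    BT = -(1 / 2) * Real.sqrt (un ^ 2 + 4) *
        ((1 + a11) / (1 - a11) * un ^ 2 + (1 + a22) / (1 - a22) * uτ ^ 2) ∧
      BT ≤ 0 := by
  have h1 : (0:ℝ) < 1 - a11 := by linarith
  have h2 : (0:ℝ) < 1 - a22 := by linarith
  have hs : Real.sqrt ((un / 2) ^ 2 + 1) = Real.sqrt (un ^ 2 + 4) / 2 := by
    have h : (un / 2) ^ 2 + 1 = (Real.sqrt (un ^ 2 + 4) / 2) ^ 2 := by
      have hq := Real.sq_sqrt (show (0:ℝ) ≤ un ^ 2 + 4 by positivity)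
      field_simp
      linarith
    rw [h, Real.sqrt_sq (by positivity)]
  subst hBT hTnn hTnτ hl1 hl3
  rw [hs]
  have key : (un / 2 - Real.sqrt (un ^ 2 + 4) / 2 -
        a11 * (un / 2 + Real.sqrt (un ^ 2 + 4) / 2)) / (1 - a11) * un * un +
      (un / 2 - Real.sqrt (un ^ 2 + 4) / 2 -
        a22 * (un / 2 + Real.sqrt (un ^ 2 + 4) / 2)) / (1 - a22) * uτ * uτ -
      un / 2 * (un ^ 2 + uτ ^ 2) =
      -(1 / 2) * Real.sqrt (un ^ 2 + 4) *
        ((1 + a11) / (1 - a11) * un ^ 2 + (1 + a22) / (1 - a22) * uτ ^ 2) := by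
    field_simp
    ring
  refine ⟨key, ?_⟩
  rw [key]
  have hA : 0 ≤ (1 + a11) / (1 - a11) * un ^ 2 :=
    mul_nonneg (div_nonneg (by linarith) h1.le) (sq_nonneg _)
  have hB : 0 ≤ (1 + a22) / (1 - a22) * uτ ^ 2 :=
    mul_nonneg (div_nonneg (by linarith) h2.le) (sq_nonneg _)
  nlinarith [Real.sqrt_nonneg (un ^ 2 + 4)]
end

section
/- Let u_n, u_τ ∈ ℝ, |u| = √(u_n²+u_τ²) > 0, and α = |u_n|/(|u| + |u_n|), so ξ₁ = (1−α)u_n + α|u| and ξ₂ = (1−α)u_n − α|u|. Then max(|ξ₁|, |ξ₂|) = 2(1−α)|u_n| ≤ |u| and min(|ξ₁|, |ξ₂|) = 0; moreover the quantity J_t = |u_n||u|²/(Y₁V₁² + Y₂V₂²) with Yᵢ = 2√((ξᵢ/2)²+1) and V₁² + V₂² = |u|² satisfies J_t ≤ |u_n|/min(Y₁, Y₂) = |u_n|/2. -/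
set_option maxHeartbeats 1000000 in
theorem stmt_19 (un uτ V1 V2 : ℝ) (hu : 0 < Real.sqrt (un ^ 2 + uτ ^ 2))
    (α ξ1 ξ2 Y1 Y2 Jt : ℝ)
    (hα : α = |un| / (Real.sqrt (un ^ 2 + uτ ^ 2) + |un|))
    (hξ1 : ξ1 = (1 - α) * un + α * Real.sqrt (un ^ 2 + uτ ^ 2))
    (hξ2 : ξ2 = (1 - α) * un - α * Real.sqrt (un ^ 2 + uτ ^ 2))
    (hY1 : Y1 = 2 * Real.sqrt ((ξ1 / 2) ^ 2 + 1))
    (hY2 : Y2 = 2 * Real.sqrt ((ξ2 / 2) ^ 2 + 1))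
    (hV : V1 ^ 2 + V2 ^ 2 = un ^ 2 + uτ ^ 2)
    (hden : 0 < Y1 * V1 ^ 2 + Y2 * V2 ^ 2)
    (hJt : Jt = |un| * (un ^ 2 + uτ ^ 2) / (Y1 * V1 ^ 2 + Y2 * V2 ^ 2)) :
    max |ξ1| |ξ2| = 2 * (1 - α) * |un| ∧
      2 * (1 - α) * |un| ≤ Real.sqrt (un ^ 2 + uτ ^ 2) ∧
      min |ξ1| |ξ2| = 0 ∧
      Jt ≤ |un| / min Y1 Y2 ∧ |un| / min Y1 Y2 = |un| / 2 := by
  set s := Real.sqrt (un ^ 2 + uτ ^ 2) with hsdef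
  have hP : 0 < un ^ 2 + uτ ^ 2 := Real.sqrt_pos.mp hu
  have hs2 : s ^ 2 = un ^ 2 + uτ ^ 2 := Real.sq_sqrt hP.le
  have habs : |un| ≤ s := by
    rw [hsdef]
    calc |un| = Real.sqrt (un ^ 2) := (Real.sqrt_sq_eq_abs un).symm
    _ ≤ _ := Real.sqrt_le_sqrt (by nlinarith [sq_nonneg uτ])
  have hd : 0 < s + |un| := by positivity
  have h1α : 1 - α = s / (s + |un|) := by rw [hα]; field_simp; ring
  have hα0 : 0 ≤ α := by rw [hα]; positivity
  have hα1' : 0 ≤ 1 - α := by rw [h1α]; positivity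
  have hαs0 : α * s = (1 - α) * |un| := by
    rw [h1α, hα]
    field_simp
  have hbound : 2 * (1 - α) * |un| ≤ s := by
    have e : 2 * (1 - α) * |un| = 2 * s * |un| / (s + |un|) := by rw [h1α]; ring
    rw [e, div_le_iff₀ hd]
    nlinarith [abs_nonneg un]
  have hY1ge : (2 : ℝ) ≤ Y1 := by
    rw [hY1]
    nlinarith [Real.sq_sqrt (show (0:ℝ) ≤ (ξ1/2)^2 + 1 by positivity),
      Real.sqrt_nonneg ((ξ1/2)^2 + 1), sq_nonneg (ξ1/2)]
  have hY2ge : (2 : ℝ) ≤ Y2 := by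
    rw [hY2]
    nlinarith [Real.sq_sqrt (show (0:ℝ) ≤ (ξ2/2)^2 + 1 by positivity),
      Real.sqrt_nonneg ((ξ2/2)^2 + 1), sq_nonneg (ξ2/2)]
  have hJt2 : Jt ≤ |un| / 2 := by
    have key : 2 * (un ^ 2 + uτ ^ 2) ≤ Y1 * V1 ^ 2 + Y2 * V2 ^ 2 := by
      linarith [mul_le_mul_of_nonneg_right hY1ge (sq_nonneg V1),
        mul_le_mul_of_nonneg_right hY2ge (sq_nonneg V2)]
    rw [hJt]
    calc |un| * (un ^ 2 + uτ ^ 2) / (Y1 * V1 ^ 2 + Y2 * V2 ^ 2)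
        ≤ |un| * (un ^ 2 + uτ ^ 2) / (2 * (un ^ 2 + uτ ^ 2)) :=
          div_le_div_of_nonneg_left (by positivity) (by positivity) key
      _ = |un| / 2 := by field_simp
  rcases le_or_gt 0 un with h | h
  · have habsun : |un| = un := abs_of_nonneg h
    have hne : s + un ≠ 0 := by rw [← habsun]; exact hd.ne'
    have hαs : α * s = (1 - α) * un := by rw [hαs0, habsun]
    have hξ2z : ξ2 = 0 := by rw [hξ2, hαs]; ring
    have hξ1e : ξ1 = 2 * (1 - α) * un := by rw [hξ1, hαs]; ring
    have habsξ1 : |ξ1| = 2 * (1 - α) * un := by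
      rw [hξ1e]; exact abs_of_nonneg (mul_nonneg (mul_nonneg zero_le_two hα1') h)
    have habsξ2 : |ξ2| = 0 := by rw [hξ2z, abs_zero]
    have hY2e : Y2 = 2 := by
      rw [hY2, hξ2z]
      norm_num
    have hmin : min Y1 Y2 = 2 := by rw [hY2e]; exact min_eq_right hY1ge
    refine ⟨?_, hbound, ?_, ?_, ?_⟩
    · rw [habsξ1, habsξ2, habsun]
      exact max_eq_left (mul_nonneg (mul_nonneg zero_le_two hα1') h)
    · rw [habsξ1, habsξ2]
      exact min_eq_right (mul_nonneg (mul_nonneg zero_le_two hα1') h)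
    · rw [hmin]; exact hJt2
    · rw [hmin]
  · have habsun : |un| = -un := abs_of_neg h
    have hne : s - un ≠ 0 := by
      have : s + |un| = s - un := by rw [habsun]; ring
      rw [← this]; exact hd.ne'
    have hαs : α * s = -((1 - α) * un) := by rw [hαs0, habsun]; ring
    have hξ1z : ξ1 = 0 := by rw [hξ1, hαs]; ring
    have hξ2e : ξ2 = 2 * (1 - α) * un := by rw [hξ2, hαs]; ring
    have habsξ2 : |ξ2| = -(2 * (1 - α) * un) := by
      rw [hξ2e]
      exact abs_of_nonpos (mul_nonpos_of_nonneg_of_nonpos (mul_nonneg zero_le_two hα1') h.le)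
    have habsξ1 : |ξ1| = 0 := by rw [hξ1z, abs_zero]
    have hY1e : Y1 = 2 := by
      rw [hY1, hξ1z]
      norm_num
    have hmin : min Y1 Y2 = 2 := by rw [hY1e]; exact min_eq_left hY2ge
    refine ⟨?_, hbound, ?_, ?_, ?_⟩
    · rw [habsξ1, habsξ2, habsun]
      rw [max_eq_right (neg_nonneg.mpr (mul_nonpos_of_nonneg_of_nonpos (mul_nonneg zero_le_two hα1') h.le))]
      ring
    · rw [habsξ1, habsξ2]
      exact min_eq_left (neg_nonneg.mpr (mul_nonpos_of_nonneg_of_nonpos (mul_nonneg zero_le_two hα1') h.le))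
    · rw [hmin]; exact hJt2
    · rw [hmin]
end
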